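/- arXiv:1803.03137 — 3 statements merged into one kernel-verified Lean document; each statement's English description precedes it below -/
import Mathlib

section
/- Let X be a biquandle and let C_n^{BD}(X) ⊆ C_n^{BR}(X) be the subgroup generated by n-tuples (x_1,…,x_n) with x_i = x_{i+1} for some 1 ≤ i ≤ n−1 (for n ≥ 2; zero otherwise). Then ∂_n(C_n^{BD}(X)) ⊆ C_{n−1}^{BD}(X); i.e., the degenerate chains form a subcomplex of the birack chain complex. In particular, ∂_3(x, x, y) and ∂_3(x, y, y) lie in C_2^{BD}(X) for all x, y ∈ X. -/
/-- A biquandle: a set with two binary operations `ul` (x ▷̲ y) and `ol` (x ▷̄ y)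
satisfying the biquandle axioms (B1)-(B4). -/
structure Biquandle (X : Type*) where
  ul : X → X → X
  ol : X → X → X
  b1 : ∀ x, ul x x = ol x x
  b2u : ∀ y, Function.Bijective fun x => ul x y
  b2o : ∀ y, Function.Bijective fun x => ol x y
  b3 : Function.Bijective (fun p : X × X => (ol p.2 p.1, ul p.1 p.2))
  b4a : ∀ x y z, ul (ul x y) (ul z y) = ul (ul x z) (ol y z)
  b4b : ∀ x y z, ol (ul x y) (ul z y) = ul (ol x z) (ol y z)
  b4c : ∀ x y z, ol (ol x y) (ol z y) = ol (ol x z) (ul y z)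

/-- The birack boundary map ∂ : C_{n+1}^{BR}(X) → C_n^{BR}(X) on the free abelian
groups on tuples, given by
∂(x_1,…,x_m) = Σ_i (-1)^i [(x_1,…,x̂_i,…,x_m) - (x_1 ▷̲ x_i,…,x_{i-1} ▷̲ x_i, x_{i+1} ▷̄ x_i,…,x_m ▷̄ x_i)],
and ∂ = 0 in degrees ≤ 1. -/
noncomputable def bqBoundary {X : Type*} (B : Biquandle X) (n : ℕ) :
    FreeAbelianGroup (Fin (n + 1) → X) →+ FreeAbelianGroup (Fin n → X) :=
  if n = 0 then 0 else
  FreeAbelianGroup.lift fun x : Fin (n + 1) → X =>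
    ∑ i : Fin (n + 1), ((-1 : ℤ) ^ ((i : ℕ) + 1)) •
      (FreeAbelianGroup.of (x ∘ i.succAbove) -
       FreeAbelianGroup.of (fun j : Fin n =>
         if ((i.succAbove j : Fin (n + 1)) : ℕ) < (i : ℕ)
           then B.ul (x (i.succAbove j)) (x i)
           else B.ol (x (i.succAbove j)) (x i)))

/-- The subgroup C_n^{BD}(X) of degenerate chains, generated by tuples with two
equal consecutive entries. -/
def degen (X : Type*) (n : ℕ) : AddSubgroup (FreeAbelianGroup (Fin n → X)) :=
  AddSubgroup.closure {c | ∃ x : Fin n → X,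
    (∃ i j : Fin n, (i : ℕ) + 1 = (j : ℕ) ∧ x i = x j) ∧ c = FreeAbelianGroup.of x}

/-!
A tuple with `x a = x (a + 1)` has a degenerate boundary. The faces and twisted faces at `a` and
`a + 1` coincide (for the twisted faces this is (B1): `x a ▷̄ x a = x a ▷̲ x a` in slot `a`), and
they carry opposite signs, so they cancel. Deleting or twisting at any other position `k` keeps
the two equal entries adjacent, and both are acted on by `x k` with the same operation, so every
remaining term is degenerate.
-/

open FreeAbelianGroup

namespace Fin

theorem val_succAbove {n : ℕ} (p : Fin (n + 1)) (i : Fin n) :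
    (p.succAbove i : ℕ) = if (i : ℕ) < p then (i : ℕ) else (i : ℕ) + 1 := by
  unfold succAbove
  split_ifs <;> simp_all [Fin.lt_def]

theorem succAbove_castSucc_of_ne {n : ℕ} {a j : Fin n} (h : j ≠ a) :
    a.castSucc.succAbove j = a.succ.succAbove j := by
  rcases lt_or_gt_of_ne h with h | h
  · rw [succAbove_castSucc_of_lt _ _ h, succAbove_succ_of_le _ _ h.le]
  · rw [succAbove_castSucc_of_le _ _ h.le, succAbove_succ_of_lt _ _ h]

theorem exists_succAbove_castSucc_succ {m : ℕ} {k : Fin (m + 2)} {a : Fin (m + 1)}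
    (h₁ : k ≠ a.castSucc) (h₂ : k ≠ a.succ) :
    ∃ b : Fin m, k.succAbove b.castSucc = a.castSucc ∧ k.succAbove b.succ = a.succ := by
  have h₁ : (k : ℕ) ≠ a := fun h => h₁ (Fin.ext h)
  have h₂ : (k : ℕ) ≠ a + 1 := fun h => h₂ (Fin.ext h)
  by_cases hk : (k : ℕ) < a
  · refine ⟨⟨a - 1, by omega⟩, ?_, ?_⟩ <;> ext <;>
      simp only [val_succAbove, val_castSucc, val_succ] <;> split_ifs <;> omega
  · refine ⟨⟨a, by omega⟩, ?_, ?_⟩ <;> ext <;>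
      simp only [val_succAbove, val_castSucc, val_succ] <;> split_ifs <;> omega

end Fin

namespace Biquandle

variable {X : Type*} (B : Biquandle X) {n : ℕ}

/-- The entries of the twisted face of `bqBoundary` at `k`, indexed by the original positions. -/
def twist (x : Fin (n + 1) → X) (k p : Fin (n + 1)) : X :=
  if (p : ℕ) < k then B.ul (x p) (x k) else B.ol (x p) (x k)

variable {B}

theorem twist_castSucc_eq_twist_succ {x : Fin (n + 1) → X} {a : Fin n}
    (hx : x a.castSucc = x a.succ) {k : Fin (n + 1)} (h₂ : k ≠ a.succ) :
    B.twist x k a.castSucc = B.twist x k a.succ := by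
  have h₂ : (k : ℕ) ≠ a + 1 := fun h => h₂ (Fin.ext h)
  have hlt : (a : ℕ) < k ↔ (a : ℕ) + 1 < k := by omega
  simp only [twist, Fin.val_castSucc, Fin.val_succ, hx, hlt]

theorem twist_comp_succAbove_castSucc_eq {x : Fin (n + 1) → X} {a : Fin n}
    (hx : x a.castSucc = x a.succ) :
    B.twist x a.castSucc ∘ a.castSucc.succAbove = B.twist x a.succ ∘ a.succ.succAbove := by
  funext j
  by_cases hj : j = a
  · subst hj
    simp [twist, hx, B.b1]
  · have hne : (a.succ.succAbove j : ℕ) ≠ a := fun h =>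
      Fin.succAbove_ne a.castSucc j ((Fin.succAbove_castSucc_of_ne hj).trans (Fin.ext h))
    have hlt : (a.succ.succAbove j : ℕ) < a ↔ (a.succ.succAbove j : ℕ) < a + 1 := by omega
    simp only [Function.comp_apply, twist, Fin.succAbove_castSucc_of_ne hj, Fin.val_castSucc,
      Fin.val_succ, hx, hlt]

end Biquandle

theorem comp_succAbove_castSucc_eq {X : Type*} {n : ℕ} {y : Fin (n + 1) → X} {a : Fin n}
    (hy : y a.castSucc = y a.succ) : y ∘ a.castSucc.succAbove = y ∘ a.succ.succAbove := by
  funext j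
  by_cases hj : j = a
  · subst hj
    simp [hy]
  · simp [Fin.succAbove_castSucc_of_ne hj]

theorem of_mem_degen {X : Type*} {n : ℕ} (x : Fin (n + 1) → X) (a : Fin n)
    (hx : x a.castSucc = x a.succ) : of x ∈ degen X (n + 1) :=
  AddSubgroup.subset_closure ⟨x, ⟨_, _, rfl, hx⟩, rfl⟩

theorem of_comp_succAbove_mem_degen {X : Type*} {m : ℕ} {y : Fin (m + 2) → X} {a : Fin (m + 1)}
    (hy : y a.castSucc = y a.succ) {k : Fin (m + 2)} (h₁ : k ≠ a.castSucc) (h₂ : k ≠ a.succ) :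
    of (y ∘ k.succAbove) ∈ degen X (m + 1) := by
  obtain ⟨b, hb₁, hb₂⟩ := Fin.exists_succAbove_castSucc_succ h₁ h₂
  exact of_mem_degen _ b (by simp [hb₁, hb₂, hy])

theorem bqBoundary_of {X : Type*} (B : Biquandle X) {m : ℕ} (x : Fin (m + 2) → X) :
    bqBoundary B (m + 1) (of x) = ∑ k : Fin (m + 2), ((-1 : ℤ) ^ ((k : ℕ) + 1)) •
      (of (x ∘ k.succAbove) - of (B.twist x k ∘ k.succAbove)) := by
  rw [bqBoundary, if_neg m.succ_ne_zero, lift_apply_of]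
  rfl

theorem bqBoundary_of_mem_degen {X : Type*} (B : Biquandle X) {n : ℕ} (x : Fin (n + 1) → X)
    (a : Fin n) (hx : x a.castSucc = x a.succ) : bqBoundary B n (of x) ∈ degen X n := by
  obtain ⟨m, rfl⟩ := Nat.exists_eq_add_one_of_ne_zero a.pos.ne'
  have hcancel : ∀ c : FreeAbelianGroup (Fin (m + 1) → X),
      (-1 : ℤ) ^ ((a.castSucc : ℕ) + 1) • c + (-1 : ℤ) ^ ((a.succ : ℕ) + 1) • c = 0 := by
    intro c
    rw [Fin.val_castSucc, Fin.val_succ, ← add_smul, pow_succ _ ((a : ℕ) + 1)]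
    simp
  rw [bqBoundary_of, ← Finset.sum_sdiff (Finset.subset_univ {a.castSucc, a.succ}),
    Finset.sum_pair Fin.castSucc_lt_succ.ne, comp_succAbove_castSucc_eq hx,
    Biquandle.twist_comp_succAbove_castSucc_eq hx, hcancel, add_zero]
  refine sum_mem fun k hk => ?_
  obtain ⟨h₁, h₂⟩ : k ≠ a.castSucc ∧ k ≠ a.succ := by simpa using hk
  exact zsmul_mem (sub_mem (of_comp_succAbove_mem_degen hx h₁ h₂)
    (of_comp_succAbove_mem_degen (Biquandle.twist_castSucc_eq_twist_succ hx h₂) h₁ h₂)) _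

theorem bqBoundary_mem_degen {X : Type*} (B : Biquandle X) (n : ℕ)
    {c : FreeAbelianGroup (Fin (n + 1) → X)} (hc : c ∈ degen X (n + 1)) :
    bqBoundary B n c ∈ degen X n := by
  refine (AddSubgroup.closure_le ((degen X n).comap (bqBoundary B n))).2 ?_ hc
  rintro _ ⟨x, ⟨i, j, hij, hx⟩, rfl⟩
  obtain ⟨a, rfl, rfl⟩ : ∃ a : Fin n, i = a.castSucc ∧ j = a.succ :=
    ⟨⟨i, by omega⟩, rfl, Fin.ext (by simp [← hij])⟩
  exact bqBoundary_of_mem_degen B x a hx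

/-- The degenerate chains form a subcomplex of the birack chain complex:
∂(C_n^{BD}) ⊆ C_{n-1}^{BD}; in particular ∂₃(x,x,y) and ∂₃(x,y,y) are degenerate. -/
theorem degen_subcomplex {X : Type*} (B : Biquandle X) :
    (∀ (n : ℕ) (c : FreeAbelianGroup (Fin (n + 1) → X)),
      c ∈ degen X (n + 1) → bqBoundary B n c ∈ degen X n) ∧
    ∀ x y : X,
      bqBoundary B 2 (FreeAbelianGroup.of ![x, x, y]) ∈ degen X 2 ∧
      bqBoundary B 2 (FreeAbelianGroup.of ![x, y, y]) ∈ degen X 2 := by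
  refine ⟨fun n _ => bqBoundary_mem_degen B n, fun x y => ⟨?_, ?_⟩⟩
  · exact bqBoundary_mem_degen B 2 (of_mem_degen _ 0 rfl)
  · exact bqBoundary_mem_degen B 2 (of_mem_degen _ 1 rfl)
end

section
/- Let X be a biquandle and Y an X-set. Then the degenerate chains form a subcomplex of the shadow birack chain complex: for all n, ∂_n(C_n^{BD}(X)_Y) ⊆ C_{n−1}^{BD}(X)_Y, where C_n^{BD}(X)_Y is generated by tuples (y, x_1, …, x_n) with x_i = x_{i+1} for some i. -/
/-- The relations a · (b ▷̄ a) = b · (a ▷̲ b) defining the associated group of a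
biquandle. -/
def bqRels {X : Type*} (B : Biquandle X) : Set (FreeGroup X) :=
  {r | ∃ a b : X, r = FreeGroup.of a * FreeGroup.of (B.ol b a) *
      (FreeGroup.of b * FreeGroup.of (B.ul a b))⁻¹}

/-- The associated group G_X = ⟨a ∈ X | a·(b ▷̄ a) = b·(a ▷̲ b)⟩ of a biquandle. -/
abbrev AssocGroup {X : Type*} (B : Biquandle X) : Type _ := PresentedGroup (bqRels B)

/-- The shadow action y ▷̲ x of a biquandle element `x` on an element `y` of an
X-set `Y` (a set with a right action of the associated group), given by the right
action of the generator corresponding to `x`. -/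
noncomputable def sact {X : Type*} (B : Biquandle X) {Y : Type*}
    [MulAction (AssocGroup B)ᵐᵒᵖ Y] (y : Y) (x : X) : Y :=
  MulOpposite.op (PresentedGroup.of x : AssocGroup B) • y

/-- The shadow birack boundary map ∂ : C_{n+1}^{BR}(X)_Y → C_n^{BR}(X)_Y. -/
noncomputable def sBoundary {X : Type*} (B : Biquandle X) (Y : Type*)
    [MulAction (AssocGroup B)ᵐᵒᵖ Y] (n : ℕ) :
    FreeAbelianGroup (Y × (Fin (n + 1) → X)) →+ FreeAbelianGroup (Y × (Fin n → X)) :=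
  if n = 0 then 0 else
  FreeAbelianGroup.lift fun yx : Y × (Fin (n + 1) → X) =>
    ∑ i : Fin (n + 1), ((-1 : ℤ) ^ ((i : ℕ) + 1)) •
      (FreeAbelianGroup.of (yx.1, yx.2 ∘ i.succAbove) -
       FreeAbelianGroup.of (sact B yx.1 (yx.2 i), fun j : Fin n =>
         if ((i.succAbove j : Fin (n + 1)) : ℕ) < (i : ℕ)
           then B.ul (yx.2 (i.succAbove j)) (yx.2 i)
           else B.ol (yx.2 (i.succAbove j)) (yx.2 i)))

/-- The subgroup C_n^{BD}(X)_Y of degenerate shadow chains, generated by tuples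
(y, x_1, …, x_n) with x_i = x_{i+1} for some i. -/
def sDegen (X Y : Type*) (n : ℕ) : AddSubgroup (FreeAbelianGroup (Y × (Fin n → X))) :=
  AddSubgroup.closure {c | ∃ (y : Y) (x : Fin n → X),
    (∃ i j : Fin n, (i : ℕ) + 1 = (j : ℕ) ∧ x i = x j) ∧ c = FreeAbelianGroup.of (y, x)}

/-!
If `x k = x (k + 1)`, every face deleting a position other than `k` and `k + 1` still has two equal
adjacent entries: the twisted face moves both by the same operation with the same argument. The
two faces at `k` and `k + 1` coincide (for the twisted ones this is (B1)) and carry opposite signs.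
-/

lemma Fin.val_succAbove_s10 {n : ℕ} (i : Fin (n + 1)) (p : Fin n) :
    (i.succAbove p : ℕ) = if (p : ℕ) < i then (p : ℕ) else p + 1 := by
  unfold Fin.succAbove
  split_ifs <;> simp_all [Fin.lt_def, Fin.val_succ]

lemma Fin.succAbove_castSucc_eq_succAbove_succ {n : ℕ} {k p : Fin n} (hp : p ≠ k) :
    k.castSucc.succAbove p = k.succ.succAbove p := by
  have hpk := Fin.val_ne_of_ne hp
  ext
  simp only [Fin.val_succAbove_s10, Fin.val_castSucc, Fin.val_succ]
  split_ifs <;> omega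

lemma Fin.exists_succAbove_eq_castSucc_and_succ {n : ℕ} {i : Fin (n + 1)} {k : Fin n}
    (hi₁ : i ≠ k.castSucc) (hi₂ : i ≠ k.succ) :
    ∃ p q : Fin n, (p : ℕ) + 1 = q ∧ i.succAbove p = k.castSucc ∧ i.succAbove q = k.succ := by
  obtain ⟨p, hp⟩ := Fin.exists_succAbove_eq hi₁.symm
  obtain ⟨q, hq⟩ := Fin.exists_succAbove_eq hi₂.symm
  refine ⟨p, q, ?_, hp, hq⟩
  have hpv := congrArg Fin.val hp
  have hqv := congrArg Fin.val hq
  have hi₁v := Fin.val_ne_of_ne hi₁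
  have hi₂v := Fin.val_ne_of_ne hi₂
  simp only [Fin.val_succAbove_s10, Fin.val_castSucc, Fin.val_succ] at hpv hqv hi₁v hi₂v
  split_ifs at hpv hqv <;> omega

lemma AddSubgroup.sum_mem_of_add_eq_zero {M ι : Type*} [AddCommGroup M] [Fintype ι]
    (H : AddSubgroup M) {t : ι → M} {k j : ι} (hkj : k ≠ j) (hc : t k + t j = 0)
    (h : ∀ i, i ≠ k → i ≠ j → t i ∈ H) : ∑ i, t i ∈ H := by
  classical
  have hj : j ∈ Finset.univ.erase k := Finset.mem_erase.2 ⟨hkj.symm, Finset.mem_univ _⟩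
  rw [← Finset.add_sum_erase _ t (Finset.mem_univ k), ← Finset.add_sum_erase _ t hj,
    ← add_assoc, hc, zero_add]
  refine H.sum_mem fun i hi => ?_
  obtain ⟨hij, hi'⟩ := Finset.mem_erase.1 hi
  exact h i (Finset.mem_erase.1 hi').1 hij

def IsDegenerate {X : Type*} {n : ℕ} (x : Fin n → X) : Prop :=
  ∃ i j : Fin n, (i : ℕ) + 1 = j ∧ x i = x j

lemma IsDegenerate.exists_castSucc_eq_succ {X : Type*} {n : ℕ} {x : Fin (n + 1) → X}
    (hx : IsDegenerate x) : ∃ k : Fin n, x k.castSucc = x k.succ := by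
  obtain ⟨i, j, hij, h⟩ := hx
  refine ⟨⟨i, by omega⟩, ?_⟩
  convert h using 2 <;> ext <;> simp [hij]

lemma of_mem_sDegen {X Y : Type*} {n : ℕ} (y : Y) {x : Fin n → X} (hx : IsDegenerate x) :
    FreeAbelianGroup.of (y, x) ∈ sDegen X Y n :=
  AddSubgroup.subset_closure ⟨y, x, hx, rfl⟩

lemma isDegenerate_comp_succAbove {X : Type*} {n : ℕ} {x : Fin (n + 1) → X} {k : Fin n}
    (hx : x k.castSucc = x k.succ) {i : Fin (n + 1)} (hi₁ : i ≠ k.castSucc) (hi₂ : i ≠ k.succ) :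
    IsDegenerate (x ∘ i.succAbove) := by
  obtain ⟨p, q, hpq, hp, hq⟩ := Fin.exists_succAbove_eq_castSucc_and_succ hi₁ hi₂
  exact ⟨p, q, hpq, by simp only [Function.comp_apply, hp, hq, hx]⟩

lemma comp_succAbove_castSucc_eq_s10 {X : Type*} {n : ℕ} {x : Fin (n + 1) → X} {k : Fin n}
    (hx : x k.castSucc = x k.succ) : x ∘ k.castSucc.succAbove = x ∘ k.succ.succAbove := by
  funext p
  by_cases hp : p = k
  · subst hp
    simp only [Function.comp_apply, Fin.succAbove_castSucc_self, Fin.succAbove_succ_self, hx]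
  · simp only [Function.comp_apply, Fin.succAbove_castSucc_eq_succAbove_succ hp]

namespace Biquandle

variable {X : Type*} (B : Biquandle X) {n : ℕ}

def twistedFace (x : Fin (n + 1) → X) (i : Fin (n + 1)) : Fin n → X := fun j =>
  if ((i.succAbove j : Fin (n + 1)) : ℕ) < (i : ℕ)
    then B.ul (x (i.succAbove j)) (x i)
    else B.ol (x (i.succAbove j)) (x i)

lemma twistedFace_castSucc_eq {x : Fin (n + 1) → X} {k : Fin n}
    (hx : x k.castSucc = x k.succ) : B.twistedFace x k.castSucc = B.twistedFace x k.succ := by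
  funext p
  by_cases hp : p = k
  · subst hp
    simp only [twistedFace, Fin.succAbove_castSucc_self, Fin.succAbove_succ_self, Fin.val_succ,
      Fin.val_castSucc]
    rw [if_neg (by omega), if_pos (by omega), hx, B.b1]
  · have hpk := Fin.val_ne_of_ne hp
    simp only [twistedFace, Fin.succAbove_castSucc_eq_succAbove_succ hp, hx, Fin.val_succAbove_s10,
      Fin.val_castSucc, Fin.val_succ]
    split_ifs <;> first | rfl | omega

lemma isDegenerate_twistedFace {x : Fin (n + 1) → X} {k : Fin n}
    (hx : x k.castSucc = x k.succ) {i : Fin (n + 1)} (hi₁ : i ≠ k.castSucc) (hi₂ : i ≠ k.succ) :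
    IsDegenerate (B.twistedFace x i) := by
  obtain ⟨p, q, hpq, hp, hq⟩ := Fin.exists_succAbove_eq_castSucc_and_succ hi₁ hi₂
  refine ⟨p, q, hpq, ?_⟩
  have hi₂v := Fin.val_ne_of_ne hi₂
  simp only [twistedFace, hp, hq, hx, Fin.val_castSucc, Fin.val_succ] at hi₂v ⊢
  split_ifs <;> first | rfl | omega

variable {Y : Type*} [MulAction (AssocGroup B)ᵐᵒᵖ Y]

lemma sBoundary_of (hn : n ≠ 0) (y : Y) (x : Fin (n + 1) → X) :
    sBoundary B Y n (FreeAbelianGroup.of (y, x)) =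
      ∑ i : Fin (n + 1), ((-1 : ℤ) ^ ((i : ℕ) + 1)) •
        (FreeAbelianGroup.of (y, x ∘ i.succAbove) -
          FreeAbelianGroup.of (sact B y (x i), B.twistedFace x i)) := by
  rw [sBoundary, if_neg hn, FreeAbelianGroup.lift_apply_of]
  rfl

lemma sBoundary_of_mem_sDegen (y : Y) {x : Fin (n + 1) → X} {k : Fin n}
    (hx : x k.castSucc = x k.succ) :
    sBoundary B Y n (FreeAbelianGroup.of (y, x)) ∈ sDegen X Y n := by
  rw [B.sBoundary_of (Fin.pos k).ne' y x]
  refine AddSubgroup.sum_mem_of_add_eq_zero _ (Fin.castSucc_lt_succ (i := k)).ne ?_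
    fun i hi₁ hi₂ => ?_
  · rw [comp_succAbove_castSucc_eq_s10 hx, B.twistedFace_castSucc_eq hx, hx, Fin.val_succ,
      Fin.val_castSucc, pow_succ _ ((k : ℕ) + 1), mul_neg_one, neg_smul, add_neg_cancel]
  · exact AddSubgroup.zsmul_mem _ (AddSubgroup.sub_mem _
      (of_mem_sDegen y (isDegenerate_comp_succAbove hx hi₁ hi₂))
      (of_mem_sDegen _ (B.isDegenerate_twistedFace hx hi₁ hi₂))) _

end Biquandle

theorem sDegen_subcomplex_general {X : Type*} (B : Biquandle X) (Y : Type*)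
    [MulAction (AssocGroup B)ᵐᵒᵖ Y] :
    ∀ (n : ℕ) (c : FreeAbelianGroup (Y × (Fin (n + 1) → X))),
      c ∈ sDegen X Y (n + 1) → sBoundary B Y n c ∈ sDegen X Y n := by
  intro n c hc
  refine (AddSubgroup.closure_le (K := (sDegen X Y n).comap (sBoundary B Y n))).2 ?_ hc
  rintro _ ⟨y, x, hx, rfl⟩
  obtain ⟨k, hk⟩ := IsDegenerate.exists_castSucc_eq_succ hx
  exact B.sBoundary_of_mem_sDegen y hk

/-- The degenerate shadow chains form a subcomplex of the shadow birack chain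
complex: ∂(C_n^{BD}(X)_Y) ⊆ C_{n-1}^{BD}(X)_Y. -/
theorem sDegen_subcomplex {X : Type*} (B : Biquandle X) (Y : Type*)
    [Nonempty Y] [MulAction (AssocGroup B)ᵐᵒᵖ Y] :
    ∀ (n : ℕ) (c : FreeAbelianGroup (Y × (Fin (n + 1) → X))),
      c ∈ sDegen X Y (n + 1) → sBoundary B Y n c ∈ sDegen X Y n :=
  sDegen_subcomplex_general B Y
end

section
/- Let X be the biquandle {1,2,3,4} with matrix M_X = [1 4 2 3 | 1 1 1 1; 2 3 1 4 | 3 3 3 3; 3 2 4 1 | 4 4 4 4; 4 1 3 2 | 2 2 2 2], let ℤ_2 = ⟨t | t²=1⟩, and let θ be the 3-cocycle given by θ(x,y,z)=t iff (x,y,z) ∈ {(1,4,1),(1,4,3),(2,4,1),(2,4,3),(3,2,1),(3,2,3),(4,2,1),(4,2,3)}, else 1. Let C be the 16-element set of quadruples {(1,1,1,1),(1,2,3,4),(1,3,4,2),(1,4,2,3),(2,1,4,3),(2,2,2,2),(2,3,1,4),(2,4,3,1),(3,1,2,4),(3,2,4,1),(3,3,3,3),(3,4,1,2),(4,1,3,2),(4,2,1,3),(4,3,2,1),(4,4,4,4)}.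 Then Σ_{(a,b,c,d)∈C} θ(a,a,b)·θ(a,a,c)·θ(a,a,d)·θ(a,c,a)·θ(a,d,a)·θ(a,b,a)·θ(c,a,c)^{-1}·θ(d,a,d)^{-1}·θ(b,a,b)^{-1} = 4 + 12t in the group ring ℤ[ℤ_2]. -/
/-- The operation i ▷̲ j of the order-4 non-quandle biquandle with matrix
M_X = [1 4 2 3 | 1 1 1 1; 2 3 1 4 | 3 3 3 3; 3 2 4 1 | 4 4 4 4; 4 1 3 2 | 2 2 2 2],
with elements 1,2,3,4 represented by 0,1,2,3 : Fin 4. -/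
def ul4 : Fin 4 → Fin 4 → Fin 4 :=
  ![![0, 3, 1, 2], ![1, 2, 0, 3], ![2, 1, 3, 0], ![3, 0, 2, 1]]

/-- The operation i ▷̄ j of the same biquandle (it depends only on i):
1 ▷̄ j = 1, 2 ▷̄ j = 3, 3 ▷̄ j = 4, 4 ▷̄ j = 2. -/
def ol4 : Fin 4 → Fin 4 → Fin 4 := fun i _ => ![0, 2, 3, 1] i

/-- The generator t of the multiplicative group ℤ₂ = ⟨t | t² = 1⟩. -/
def tgen : Multiplicative (ZMod 2) := Multiplicative.ofAdd 1

/-- The 3-cochain θ = χ_{(1,4,1)}χ_{(1,4,3)}χ_{(2,4,1)}χ_{(2,4,3)}χ_{(3,2,1)}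
χ_{(3,2,3)}χ_{(4,2,1)}χ_{(4,2,3)} with values in ℤ₂ (elements 1,2,3,4 represented
by 0,1,2,3 : Fin 4). -/
def θ4 : Fin 4 → Fin 4 → Fin 4 → Multiplicative (ZMod 2) := fun x y z =>
  if (x, y, z) ∈ [((0 : Fin 4), (3 : Fin 4), (0 : Fin 4)), (0, 3, 2), (1, 3, 0),
      (1, 3, 2), (2, 1, 0), (2, 1, 2), (3, 1, 0), (3, 1, 2)]
    then tgen else 1

/-- The 16 biquandle colorings of the marked graph diagram of the 3-twist-spun
trefoil (elements 1,2,3,4 represented by 0,1,2,3 : Fin 4). -/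
def C16 : Finset (Fin 4 × Fin 4 × Fin 4 × Fin 4) :=
  {(0, 0, 0, 0), (0, 1, 2, 3), (0, 2, 3, 1), (0, 3, 1, 2),
   (1, 0, 3, 2), (1, 1, 1, 1), (1, 2, 0, 3), (1, 3, 2, 0),
   (2, 0, 1, 3), (2, 1, 3, 0), (2, 2, 2, 2), (2, 3, 0, 1),
   (3, 0, 2, 1), (3, 1, 0, 2), (3, 2, 1, 0), (3, 3, 3, 3)}

/-- The Boltzman weight of a coloring (a,b,c,d). -/
def wt (p : Fin 4 × Fin 4 × Fin 4 × Fin 4) : Multiplicative (ZMod 2) :=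
  match p with
  | (a, b, c, d) =>
    θ4 a a b * θ4 a a c * θ4 a a d * θ4 a c a * θ4 a d a * θ4 a b a *
      (θ4 c a c)⁻¹ * (θ4 d a d)⁻¹ * (θ4 b a b)⁻¹

/-
The cochain θ is trivial on every triple (a, a, x), and θ(a, x, a) θ(x, a, x)⁻¹ = t for exactly one
x ≠ a (namely for {a, x} = {1, 4} or {2, 3}). The weight of a coloring (a, b, c, d) is the product
of these factors over x ∈ {b, c, d}, so it is 1 on the four constant colorings, while each of the
twelve others has {b, c, d} = X \ {a} and hence weight t.
-/

open scoped Finset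

theorem MonoidAlgebra.sum_single_ite_one {ι R M : Type*} [Semiring R] (s : Finset ι)
    (P : ι → Prop) [DecidablePred P] (m₁ m₂ : M) :
    ∑ i ∈ s, MonoidAlgebra.single (if P i then m₁ else m₂) (1 : R) =
      MonoidAlgebra.single m₁ (#{i ∈ s | P i} : R) +
        MonoidAlgebra.single m₂ (#{i ∈ s | ¬P i} : R) := by
  simp only [apply_ite (MonoidAlgebra.single · (1 : R)), Finset.sum_ite, Finset.sum_const,
    ← Nat.cast_smul_eq_nsmul R, MonoidAlgebra.smul_single', mul_one]

theorem wt_of_mem_C16 : ∀ p ∈ C16, wt p = if p.1 = p.2.1 then 1 else tgen := by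
  simp only [C16, Finset.mem_insert, Finset.mem_singleton, forall_eq_or_imp, forall_eq]
  decide

theorem card_C16_filter_diag : #{p ∈ C16 | p.1 = p.2.1} = 4 := by decide

theorem card_C16_filter_not_diag : #{p ∈ C16 | ¬p.1 = p.2.1} = 12 := by decide

/-- The biquandle cocycle invariant of the 3-twist-spun trefoil:
Σ_{(a,b,c,d) ∈ C} weight = 4 + 12t in the group ring ℤ[ℤ₂]. -/
theorem cocycle_invariant_three_twist_spun_trefoil :
    (∑ p ∈ C16, (MonoidAlgebra.single (wt p) (1 : ℤ) :
        MonoidAlgebra ℤ (Multiplicative (ZMod 2)))) =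
      MonoidAlgebra.single (1 : Multiplicative (ZMod 2)) (4 : ℤ) +
        MonoidAlgebra.single tgen (12 : ℤ) := by
  rw [Finset.sum_congr rfl fun p hp => by rw [wt_of_mem_C16 p hp],
    MonoidAlgebra.sum_single_ite_one, card_C16_filter_diag, card_C16_filter_not_diag]
  norm_num
end
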